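/- For every real α>−1, lim_{q→1⁻} (1−q²)^{(α+1)/2} · c_α = 1/√(Γ(α+1)), where c_α = sqrt( (−q^{−2α−1};q²)_∞ (−q^{2α+3};q²)_∞ (q^{2α+2};q²)_∞ / (2(1−q) (−q;q²)_∞ (−q;q²)_∞ (q²;q²)_∞) ). -/

import Mathlib

open scoped BigOperators
open Real Filter

noncomputable section

/-- q-shifted factorial `(a;q)_n`. -/
def qPoch (a q : ℝ) (n : ℕ) : ℝ := ∏ k ∈ Finset.range n, (1 - a * q ^ k)

/-- infinite q-shifted factorial `(a;q)_∞`. -/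
def qPochInf (a q : ℝ) : ℝ := ∏' k : ℕ, (1 - a * q ^ k)

/-- q-number `⟦x⟧_q = (1-q^x)/(1-q)`. -/
def qNumber (q x : ℝ) : ℝ := (1 - q ^ x) / (1 - q)

/-- generalized q-integer `⟦n⟧_{q,α}`: equals `⟦n⟧_q` for even `n` and
`⟦n+2α+1⟧_q` for odd `n` (so `⟦2m+1⟧_{q,α} = ⟦2m+2α+2⟧_q`). -/
def qNumAlpha (q α : ℝ) (n : ℕ) : ℝ :=
  if n % 2 = 0 then qNumber q n else qNumber q (n + 2 * α + 1)

/-- generalized q-factorial `n!_{q,α}`. -/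
def qFactAlpha (q α : ℝ) (n : ℕ) : ℝ := ∏ k ∈ Finset.range n, qNumAlpha q α (k + 1)

/-- generalized q-shifted factorial `(q;q)_{n,α} = (1-q)^n n!_{q,α}`. -/
def qPochAlpha (q α : ℝ) (n : ℕ) : ℝ := (1 - q) ^ n * qFactAlpha q α n

/-- generalized discrete q-Hermite II polynomials `h̃_{n,α}(x;q)`. -/
def hTilde (q α : ℝ) (n : ℕ) (x : ℝ) : ℝ :=
  qPoch q q n * ∑ k ∈ Finset.range (n / 2 + 1),
    (-1 : ℝ) ^ k * q ^ ((k * (2 * k + 1) : ℤ) - (2 * n * k : ℤ)) * x ^ (n - 2 * k) /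
      (qPoch (q ^ 2) (q ^ 2) k * qPochAlpha q α (n - 2 * k))

/-- the weight `ω_α(x;q) = e_{q²}(-q^{-2α-1}x²) = 1/∏_{k≥0}(1+q^{-2α-1}x²q^{2k})`. -/
def omegaAlpha (q α x : ℝ) : ℝ :=
  (∏' k : ℕ, (1 + q ^ (-(2 * α + 1)) * x ^ 2 * q ^ (2 * k)))⁻¹

/-- normalization constant `c_α`. -/
def cAlpha (q α : ℝ) : ℝ :=
  Real.sqrt (qPochInf (-q ^ (-(2 * α + 1))) (q ^ 2) * qPochInf (-q ^ (2 * α + 3)) (q ^ 2) *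
      qPochInf (q ^ (2 * α + 2)) (q ^ 2) /
    (2 * (1 - q) *
      (qPochInf (-q) (q ^ 2) * qPochInf (-q) (q ^ 2) * qPochInf (q ^ 2) (q ^ 2))))

/-- normalization constant `d_{n,α} = c_α q^{n²/2} (q;q)_{n,α}^{1/2} / (q;q)_n`. -/
def dAlpha (q α : ℝ) (n : ℕ) : ℝ :=
  cAlpha q α * q ^ (((n : ℝ) ^ 2) / 2) * Real.sqrt (qPochAlpha q α n) / qPoch q q n

/-- the (q,α)-deformed Hermite functions `φ_n^α(x;q)`. -/
def phiQ (q α : ℝ) (n : ℕ) (x : ℝ) : ℝ :=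
  dAlpha q α n * Real.sqrt (omegaAlpha q α x) * hTilde q α n x

/-- parity indicator `θ(n)`: 1 if `n` is odd, 0 if `n` is even. -/
def theta (n : ℕ) : ℝ := if n % 2 = 1 then 1 else 0

/-- the q-Gamma function `Γ_q(z) = (q;q)_∞ / (q^z;q)_∞ · (1-q)^{1-z}`. -/
def qGammaF (q z : ℝ) : ℝ := qPochInf q q / qPochInf (q ^ z) q * (1 - q) ^ (1 - z)

/-- Rosenblum generalized factorial `γ_ν(n)`. -/
def gammaGen (ν : ℝ) (n : ℕ) : ℝ :=
  2 ^ n * (Nat.factorial (n / 2) : ℝ) *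
    Real.Gamma (ν + (((n + 1) / 2 : ℕ) : ℝ) + 1 / 2) / Real.Gamma (ν + 1 / 2)

/-- generalized Hermite polynomials `H_n^ν(x)`. -/
def HGen (ν : ℝ) (n : ℕ) (x : ℝ) : ℝ :=
  (Nat.factorial n : ℝ) * ∑ k ∈ Finset.range (n / 2 + 1),
    (-1 : ℝ) ^ k * (2 * x) ^ (n - 2 * k) / ((Nat.factorial k : ℝ) * gammaGen ν (n - 2 * k))

/-- Rosenblum generalized Hermite functions `φ_n^ν(x)`. -/
def phiGen (ν : ℝ) (n : ℕ) (x : ℝ) : ℝ :=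
  Real.sqrt (gammaGen ν n / Real.Gamma (ν + 1 / 2)) * Real.exp (-x ^ 2 / 2) *
    HGen ν n x / ((2 : ℝ) ^ ((n : ℝ) / 2) * (Nat.factorial n : ℝ))

/-- symmetric q-number `[x]_s = (s^x - s^{-x})/(s - s^{-1})`. -/
def qNumSym (s x : ℝ) : ℝ := (s ^ x - s ^ (-x)) / (s - s⁻¹)

/-- Euler q-exponential `e_q(z) = Σ z^k/(q;q)_k`. -/
def eExp (q z : ℝ) : ℝ := ∑' k : ℕ, z ^ k / qPoch q q k

/-- generalized q-exponential `E_{q,α}(z) = Σ q^{k(k-1)/2} z^k/(q;q)_{k,α}`. -/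
def bigEAlpha (q α z : ℝ) : ℝ := ∑' k : ℕ, q ^ (k * (k - 1) / 2) * z ^ k / qPochAlpha q α k

/-- generalized q-exponential `e_{q,α}(z) = Σ z^k/(q;q)_{k,α}`. -/
def eExpAlpha (q α z : ℝ) : ℝ := ∑' k : ℕ, z ^ k / qPochAlpha q α k


/-!
With `Γ_q(z) = (q;q)_∞ / (q^z;q)_∞ · (1-q)^{1-z}` one has
`(1-q²)^{α+1} c_α² = (1+q)/2 · θ(q) / Γ_{q²}(α+1)`, where
`θ(q) = (-q^{-2α-1};q²)_∞ (-q^{2α+3};q²)_∞ / (-q;q²)_∞²`, so it suffices that `Γ_q → Γ` and `θ → 1`.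

`log Γ_q` is convex, since each `z ↦ log (1 - q^{z+k})` is concave, and `Γ_q(z+1) = [z]_q Γ_q(z)`.
The Bohr–Mollerup slope inequalities then squeeze `Γ_q(s)` between q-analogues of Euler's sequence
`n^s n! / (s(s+1)⋯(s+n))`; letting first `q → 1` and then `n → ∞` gives `Γ_q(s) → Γ(s)`.

Since `q^{-2α-1} · q^{2α+3} = q²`, every factor of `θ(q)` has the form
`(1+ux)(1+vx)/(1+cx)²` with `uv = c²`, which lies in `[1, 1 + (u+v-2c)x]`. Hence
`1 ≤ θ(q) ≤ exp ((u+v-2q)/(1-q²))`, and the exponent tends to `0`.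
-/

open Topology Set

section
variable {E : Type*} [AddCommGroup E] [Module ℝ E] {s : Set E}

theorem ConcaveOn.log_comp {f : E → ℝ} (hf : ConcaveOn ℝ s f) (hpos : ∀ x ∈ s, 0 < f x) :
    ConcaveOn ℝ s (fun x => log (f x)) := by
  refine ⟨hf.1, fun x hx y hy a b ha hb hab => ?_⟩
  have hcomb : 0 < a • f x + b • f y := convex_Ioi (0 : ℝ) (hpos x hx) (hpos y hy) ha hb hab
  calc a • log (f x) + b • log (f y) ≤ log (a • f x + b • f y) :=
        strictConcaveOn_log_Ioi.concaveOn.2 (hpos x hx) (hpos y hy) ha hb hab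
    _ ≤ log (f (a • x + b • y)) := log_le_log hcomb (hf.2 hx hy ha hb hab)

theorem ConcaveOn.tsum {f : ℕ → E → ℝ} (hf : ∀ k, ConcaveOn ℝ s (f k))
    (hsum : ∀ x ∈ s, Summable fun k => f k x) : ConcaveOn ℝ s (fun x => ∑' k, f k x) := by
  refine ⟨(hf 0).1, fun x hx y hy a b ha hb hab => ?_⟩
  simp only [smul_eq_mul]
  have hx' := (hsum x hx).mul_left a
  have hy' := (hsum y hy).mul_left b
  rw [← tsum_mul_left, ← tsum_mul_left, ← hx'.tsum_add hy']
  exact (hx'.add hy').tsum_le_tsum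
    (fun k => by simpa only [smul_eq_mul] using (hf k).2 hx hy ha hb hab)
    (hsum _ ((hf 0).1 hx hy ha hb hab))

end

theorem tendsto_qNumber (x : ℝ) : Tendsto (fun q => qNumber q x) (𝓝[≠] 1) (𝓝 x) := by
  have hd : HasDerivAt (fun q : ℝ => q ^ x) x 1 := by
    simpa using Real.hasDerivAt_rpow_const (x := 1) (p := x) (Or.inl one_ne_zero)
  refine (hasDerivAt_iff_tendsto_slope.mp hd).congr' ?_
  filter_upwards [self_mem_nhdsWithin] with q hq
  rw [slope_def_field, qNumber, one_rpow, ← neg_div_neg_eq, neg_sub, neg_sub]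

theorem tendsto_qNumber_Ioo (x : ℝ) :
    Tendsto (fun q => qNumber q x) (𝓝[Ioo 0 1] 1) (𝓝 x) :=
  (tendsto_qNumber x).mono_left (nhdsWithin_mono _ fun _ hq => hq.2.ne)

theorem qNumber_pos {q x : ℝ} (hq0 : 0 < q) (hq1 : q < 1) (hx : 0 < x) : 0 < qNumber q x :=
  div_pos (sub_pos.2 (rpow_lt_one hq0.le hq1 hx)) (sub_pos.2 hq1)

section qPochhammer
variable {q : ℝ} (hq0 : 0 ≤ q) (hq1 : q < 1)
include hq0 hq1

theorem summable_log_one_sub_mul_pow (a : ℝ) : Summable fun k : ℕ => log (1 - a * q ^ k) := by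
  simpa [sub_eq_add_neg] using Real.summable_log_one_add_of_summable
    ((summable_geometric_of_lt_one hq0 hq1).mul_left (-a))

theorem one_sub_mul_pow_pos {a : ℝ} (ha : a < 1) (k : ℕ) : 0 < 1 - a * q ^ k := by
  have h1 : q ^ k ≤ 1 := pow_le_one₀ hq0 hq1.le
  rcases le_or_gt a 0 with h | h
  · nlinarith [pow_nonneg hq0 k]
  · nlinarith

theorem qPochInf_eq_exp_tsum_log {a : ℝ} (ha : a < 1) :
    qPochInf a q = exp (∑' k : ℕ, log (1 - a * q ^ k)) :=
  (Real.rexp_tsum_eq_tprod (one_sub_mul_pow_pos hq0 hq1 ha)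
    (summable_log_one_sub_mul_pow hq0 hq1 a)).symm

theorem qPochInf_pos {a : ℝ} (ha : a < 1) : 0 < qPochInf a q := by
  rw [qPochInf_eq_exp_tsum_log hq0 hq1 ha]
  exact exp_pos _

theorem qPochInf_eq_one_sub_mul (a : ℝ) : qPochInf a q = (1 - a) * qPochInf (a * q) q := by
  have hmul : Multipliable fun k : ℕ => 1 - a * q * q ^ k := by
    simpa [sub_eq_add_neg] using Real.multipliable_one_add_of_summable
      ((summable_geometric_of_lt_one hq0 hq1).mul_left (-(a * q)))
  rw [qPochInf, qPochInf, tprod_eq_zero_mul' (by simpa [pow_succ', mul_assoc] using hmul)]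
  simp [pow_succ', mul_assoc]

end qPochhammer

section qGamma
variable {q : ℝ} (hq0 : 0 < q) (hq1 : q < 1)
include hq0 hq1

theorem qGammaF_pos {z : ℝ} (hz : 0 < z) : 0 < qGammaF q z := by
  have := qPochInf_pos hq0.le hq1 hq1
  have := qPochInf_pos hq0.le hq1 (rpow_lt_one hq0.le hq1 hz)
  have := sub_pos.2 hq1
  unfold qGammaF
  positivity

theorem qGammaF_add_one {z : ℝ} (hz : 0 < z) : qGammaF q (z + 1) = qNumber q z * qGammaF q z := by
  have hpeel := qPochInf_eq_one_sub_mul hq0.le hq1 (q ^ z)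
  rw [← rpow_add_one hq0.ne'] at hpeel
  have := qPochInf_pos hq0.le hq1 (rpow_lt_one hq0.le hq1 (by linarith : 0 < z + 1))
  have := sub_pos.2 (rpow_lt_one hq0.le hq1 hz)
  have := sub_pos.2 hq1
  rw [qGammaF, qGammaF, qNumber, hpeel, show 1 - (z + 1) = (1 - z) - 1 by ring,
    rpow_sub_one this.ne']
  field_simp

theorem qGammaF_add_nat {z : ℝ} (hz : 0 < z) (n : ℕ) :
    qGammaF q (z + n) = qGammaF q z * ∏ j ∈ Finset.range n, qNumber q (z + j) := by
  induction n with
  | zero => simp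
  | succ n ih =>
    rw [Nat.cast_succ, ← add_assoc, qGammaF_add_one hq0 hq1 (by positivity), ih,
      Finset.prod_range_succ]
    ring

theorem qGammaF_nat_add_one (n : ℕ) :
    qGammaF q (n + 1) = ∏ j ∈ Finset.range n, qNumber q (j + 1) := by
  have h1 : qGammaF q 1 = 1 := by
    rw [qGammaF, rpow_one, sub_self, rpow_zero, mul_one,
      div_self (qPochInf_pos hq0.le hq1 hq1).ne']
  simpa [h1, add_comm] using qGammaF_add_nat hq0 hq1 one_pos n

theorem concaveOn_log_one_sub_rpow_mul_pow (k : ℕ) :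
    ConcaveOn ℝ (Ioi 0) fun z : ℝ => log (1 - q ^ z * q ^ k) := by
  have hconv : ConvexOn ℝ (Ioi 0) fun z : ℝ => q ^ z * q ^ k := by
    simpa [smul_eq_mul, mul_comm] using
      ((convexOn_rpow_left hq0).subset (subset_univ _) (convex_Ioi 0)).smul (pow_nonneg hq0.le k)
  refine ConcaveOn.log_comp ?_ fun z hz => ?_
  · exact (concaveOn_const 1 (convex_Ioi 0)).sub hconv
  · rw [← rpow_natCast, ← rpow_add hq0]
    exact sub_pos.2 (rpow_lt_one hq0.le hq1 (add_pos_of_pos_of_nonneg hz k.cast_nonneg))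

theorem convexOn_log_qGammaF : ConvexOn ℝ (Ioi 0) fun z => log (qGammaF q z) := by
  have hS := ConcaveOn.tsum (concaveOn_log_one_sub_rpow_mul_pow hq0 hq1) fun z _ =>
    summable_log_one_sub_mul_pow hq0.le hq1 _
  have hlin := ((LinearMap.mulRight ℝ (-log (1 - q))).convexOn (convex_Ioi 0)).add_const
    (log (1 - q))
  refine ((hS.neg.add_const (log (qPochInf q q))).add hlin).congr fun z hz => ?_
  have hz : (0 : ℝ) < z := hz
  have h1q := sub_pos.2 hq1
  have hP := qPochInf_pos hq0.le hq1 hq1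
  rw [qGammaF, qPochInf_eq_exp_tsum_log hq0.le hq1 (rpow_lt_one hq0.le hq1 hz),
    log_mul (by positivity) (by positivity), log_div hP.ne' (exp_pos _).ne', log_exp,
    log_rpow h1q]
  simp only [Pi.add_apply, Pi.neg_apply, LinearMap.mulRight_apply]
  ring


theorem log_qGammaF_add_one_sub {z : ℝ} (hz : 0 < z) :
    log (qGammaF q (z + 1)) - log (qGammaF q z) = log (qNumber q z) := by
  rw [qGammaF_add_one hq0 hq1 hz, log_mul (qNumber_pos hq0 hq1 hz).ne'
    (qGammaF_pos hq0 hq1 hz).ne', add_sub_cancel_right]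

theorem qGammaF_mul_qNumber_rpow_le {x s : ℝ} (hx : 0 < x) (hs : 0 < s) :
    qGammaF q (x + 1) * qNumber q x ^ s ≤ qGammaF q (x + 1 + s) := by
  have hΓ := qGammaF_pos hq0 hq1 (by positivity : 0 < x + 1)
  have hN := qNumber_pos hq0 hq1 hx
  have hslope := (convexOn_log_qGammaF hq0 hq1).slope_mono_adjacent (x := x) (y := x + 1)
    (z := x + 1 + s) hx (by positivity : (0 : ℝ) < x + 1 + s) (by linarith) (by linarith)
  simp only [log_qGammaF_add_one_sub hq0 hq1 hx, add_sub_cancel_left, div_one,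
    le_div_iff₀ hs] at hslope
  rw [← log_le_log_iff (by positivity) (qGammaF_pos hq0 hq1 (by positivity)),
    log_mul hΓ.ne' (by positivity), log_rpow hN]
  linarith

theorem qGammaF_le_mul_qNumber_rpow {x s : ℝ} (hx : 0 < x) (hs : 0 < s) :
    qGammaF q (x + s) ≤ qGammaF q x * qNumber q (x + s) ^ s := by
  have hxs : 0 < x + s := by positivity
  have hΓ := qGammaF_pos hq0 hq1 hx
  have hN := qNumber_pos hq0 hq1 hxs
  have hslope := (convexOn_log_qGammaF hq0 hq1).slope_mono_adjacent (x := x) (y := x + s)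
    (z := x + s + 1) hx (by positivity : (0 : ℝ) < x + s + 1) (by linarith) (by linarith)
  simp only [log_qGammaF_add_one_sub hq0 hq1 hxs, add_sub_cancel_left, div_one,
    div_le_iff₀ hs] at hslope
  rw [← log_le_log_iff (qGammaF_pos hq0 hq1 hxs) (by positivity),
    log_mul hΓ.ne' (by positivity), log_rpow hN]
  linarith

end qGamma

theorem tendsto_of_squeeze_of_tendsto_bounds {ι α β : Type*} [LinearOrder β] [TopologicalSpace β]
    [OrderTopology β] {F : Filter α} {G : Filter ι} [G.NeBot] {g : α → β} {l u : ι → α → β}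
    {lim_l lim_u : ι → β} {b : β} (hl : ∀ᶠ n in G, Tendsto (l n) F (𝓝 (lim_l n)))
    (hu : ∀ᶠ n in G, Tendsto (u n) F (𝓝 (lim_u n))) (hlb : Tendsto lim_l G (𝓝 b))
    (hub : Tendsto lim_u G (𝓝 b)) (h : ∀ᶠ n in G, ∀ᶠ x in F, l n x ≤ g x ∧ g x ≤ u n x) :
    Tendsto g F (𝓝 b) := by
  refine tendsto_order.2 ⟨fun a ha => ?_, fun a ha => ?_⟩
  · obtain ⟨n, hn, hln, hgn⟩ := ((hlb.eventually (lt_mem_nhds ha)).and (hl.and h)).exists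
    filter_upwards [hln.eventually (lt_mem_nhds hn), hgn] with x hx hgx
    exact hx.trans_le hgx.1
  · obtain ⟨n, hn, hun, hgn⟩ := ((hub.eventually (gt_mem_nhds ha)).and (hu.and h)).exists
    filter_upwards [hun.eventually (gt_mem_nhds hn), hgn] with x hx hgx
    exact hgx.2.trans_lt hx

def qGammaSeq (q s : ℝ) (n : ℕ) : ℝ :=
  qNumber q n ^ s * (∏ j ∈ Finset.range n, qNumber q (j + 1)) /
    ∏ j ∈ Finset.range (n + 1), qNumber q (s + j)

section qGammaSeq
variable {q s : ℝ} (hq0 : 0 < q) (hq1 : q < 1) (hs : 0 < s)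
include hq0 hq1 hs

theorem prod_qNumber_pos (n : ℕ) : 0 < ∏ j ∈ Finset.range n, qNumber q (s + j) :=
  Finset.prod_pos fun j _ => qNumber_pos hq0 hq1 (by positivity)

theorem qGammaF_nat_add_one_add (n : ℕ) :
    qGammaF q (n + 1 + s) = qGammaF q s * ∏ j ∈ Finset.range (n + 1), qNumber q (s + j) := by
  rw [← qGammaF_add_nat hq0 hq1 hs, Nat.cast_succ, add_comm s]

theorem qGammaSeq_le_qGammaF {n : ℕ} (hn : n ≠ 0) : qGammaSeq q s n ≤ qGammaF q s := by
  rw [qGammaSeq, div_le_iff₀ (prod_qNumber_pos hq0 hq1 hs _), mul_comm,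
    ← qGammaF_nat_add_one hq0 hq1, ← qGammaF_nat_add_one_add hq0 hq1 hs]
  exact qGammaF_mul_qNumber_rpow_le hq0 hq1 (Nat.cast_pos.2 (Nat.pos_of_ne_zero hn)) hs

theorem qGammaF_le_qGammaSeq_mul {n : ℕ} (hn : n ≠ 0) :
    qGammaF q s ≤ qGammaSeq q s n * (qNumber q (n + 1 + s) / qNumber q n) ^ s := by
  have hN := qNumber_pos hq0 hq1 (Nat.cast_pos.2 (Nat.pos_of_ne_zero hn))
  have hP := prod_qNumber_pos hq0 hq1 hs (n + 1)
  have hrw : qGammaSeq q s n * (qNumber q (n + 1 + s) / qNumber q n) ^ s =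
      qGammaF q (n + 1) * qNumber q (n + 1 + s) ^ s /
        ∏ j ∈ Finset.range (n + 1), qNumber q (s + j) := by
    rw [qGammaSeq, qGammaF_nat_add_one hq0 hq1,
      div_rpow (qNumber_pos hq0 hq1 (by positivity)).le hN.le]
    field_simp
  rw [hrw, le_div_iff₀ hP, ← qGammaF_nat_add_one_add hq0 hq1 hs]
  exact qGammaF_le_mul_qNumber_rpow hq0 hq1 (by positivity) hs

end qGammaSeq

theorem tendsto_qGammaSeq {s : ℝ} (hs : 0 < s) (n : ℕ) :
    Tendsto (fun q => qGammaSeq q s n) (𝓝[Ioo 0 1] 1) (𝓝 (GammaSeq s n)) := by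
  have hfact : ∏ j ∈ Finset.range n, ((j : ℝ) + 1) = Nat.factorial n := by
    exact_mod_cast Finset.prod_range_add_one_eq_factorial n
  rw [GammaSeq, ← hfact]
  refine Tendsto.div (((tendsto_qNumber_Ioo n).rpow_const (Or.inr hs.le)).mul
    (tendsto_finsetProd _ fun j _ => tendsto_qNumber_Ioo _))
    (tendsto_finsetProd _ fun j _ => tendsto_qNumber_Ioo _) ?_
  exact (Finset.prod_pos fun j _ => by positivity).ne'

theorem tendsto_GammaSeq_mul_rpow (s : ℝ) :
    Tendsto (fun n : ℕ => GammaSeq s n * ((n + 1 + s) / n) ^ s) atTop (𝓝 (Gamma s)) := by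
  have hratio : Tendsto (fun n : ℕ => ((n : ℝ) + 1 + s) / n) atTop (𝓝 1) := by
    have := (tendsto_const_div_atTop_nhds_zero_nat (1 + s)).const_add 1
    rw [add_zero] at this
    refine this.congr' ?_
    filter_upwards [eventually_ne_atTop 0] with n hn
    field_simp
    ring
  simpa using (GammaSeq_tendsto_Gamma s).mul (hratio.rpow_const (Or.inl one_ne_zero))

theorem tendsto_qGammaF {z : ℝ} (hz : 0 < z) :
    Tendsto (fun q => qGammaF q z) (𝓝[Ioo 0 1] 1) (𝓝 (Gamma z)) := by
  refine tendsto_of_squeeze_of_tendsto_bounds (.of_forall (tendsto_qGammaSeq hz))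
    (u := fun n q => qGammaSeq q z n * (qNumber q (n + 1 + z) / qNumber q n) ^ z) ?_
    (GammaSeq_tendsto_Gamma z) (tendsto_GammaSeq_mul_rpow z) ?_
  all_goals filter_upwards [eventually_ne_atTop 0] with n hn
  · exact (tendsto_qGammaSeq hz n).mul (((tendsto_qNumber_Ioo _).div (tendsto_qNumber_Ioo _)
      (Nat.cast_ne_zero.2 hn)).rpow_const (Or.inr hz.le))
  · filter_upwards [self_mem_nhdsWithin] with q hq
    exact ⟨qGammaSeq_le_qGammaF hq.1 hq.2 hz hn, qGammaF_le_qGammaSeq_mul hq.1 hq.2 hz hn⟩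

theorem log_one_add_mul_add_log_sub_two_mul_log_mem_Icc {u v c x : ℝ} (hu : 0 ≤ u) (hv : 0 ≤ v)
    (hc : 0 ≤ c) (huv : u * v = c ^ 2) (hx : 0 ≤ x) :
    log (1 + u * x) + log (1 + v * x) - 2 * log (1 + c * x) ∈ Icc 0 ((u + v - 2 * c) * x) := by
  have hw : 0 ≤ u + v - 2 * c := by nlinarith [sq_nonneg (u - v)]
  have hcx : 1 ≤ (1 + c * x) ^ 2 := one_le_pow₀ (by nlinarith)
  -- `(1 + u x)(1 + v x) = (1 + c x)^2 + (u + v - 2c) x`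
  have hlog : log (1 + u * x) + log (1 + v * x) - 2 * log (1 + c * x) =
      log (1 + (u + v - 2 * c) * x / (1 + c * x) ^ 2) := by
    rw [two_mul, ← log_mul (by positivity) (by positivity), ← log_mul (by positivity)
      (by positivity), ← log_div (by positivity) (by positivity)]
    congr 1
    field_simp
    linear_combination x ^ 2 * huv
  rw [hlog]
  set t := (u + v - 2 * c) * x / (1 + c * x) ^ 2
  have ht : 0 ≤ t := by positivity
  refine ⟨log_nonneg (by linarith), ?_⟩
  calc log (1 + t) ≤ t := by linarith [log_le_sub_one_of_pos (by linarith : 0 < 1 + t)]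
    _ ≤ (u + v - 2 * c) * x := div_le_self (by positivity) hcx

theorem qPochInf_neg_mul_div_mem_Icc {Q u v c : ℝ} (hQ0 : 0 ≤ Q) (hQ1 : Q < 1) (hu : 0 ≤ u)
    (hv : 0 ≤ v) (hc : 0 ≤ c) (huv : u * v = c ^ 2) :
    qPochInf (-u) Q * qPochInf (-v) Q / (qPochInf (-c) Q * qPochInf (-c) Q) ∈
      Icc 1 (exp ((u + v - 2 * c) / (1 - Q))) := by
  have hsum (a : ℝ) : Summable fun k : ℕ => log (1 + a * Q ^ k) := by
    simpa using summable_log_one_sub_mul_pow hQ0 hQ1 (-a)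
  have hexp (a : ℝ) (ha : 0 ≤ a) : qPochInf (-a) Q = exp (∑' k : ℕ, log (1 + a * Q ^ k)) := by
    simpa using qPochInf_eq_exp_tsum_log hQ0 hQ1 (by linarith : -a < 1)
  have hterm (k : ℕ) := log_one_add_mul_add_log_sub_two_mul_log_mem_Icc hu hv hc huv
    (pow_nonneg hQ0 k)
  have hgeom := (summable_geometric_of_lt_one hQ0 hQ1).mul_left (u + v - 2 * c)
  have htsum : ∑' k : ℕ, log (1 + u * Q ^ k) + ∑' k : ℕ, log (1 + v * Q ^ k) -
      2 * ∑' k : ℕ, log (1 + c * Q ^ k) = ∑' k : ℕ, (log (1 + u * Q ^ k) + log (1 + v * Q ^ k) -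
        2 * log (1 + c * Q ^ k)) := by
    rw [((hsum u).add (hsum v)).tsum_sub ((hsum c).mul_left 2), (hsum u).tsum_add (hsum v),
      tsum_mul_left]
  rw [hexp u hu, hexp v hv, hexp c hc, ← exp_add, ← exp_add, ← exp_sub, ← two_mul, htsum,
    mem_Icc, one_le_exp_iff, exp_le_exp, div_eq_mul_inv, ← tsum_geometric_of_lt_one hQ0 hQ1,
    ← tsum_mul_left]
  exact ⟨tsum_nonneg fun k => (hterm k).1,
    (((hsum u).add (hsum v)).sub ((hsum c).mul_left 2)).tsum_le_tsum (fun k => (hterm k).2) hgeom⟩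

theorem tendsto_rpow_add_rpow_sub_div {a b : ℝ} (hab : a + b = 2) :
    Tendsto (fun q : ℝ => (q ^ a + q ^ b - 2 * q) / (1 - q ^ 2)) (𝓝[Ioo 0 1] 1) (𝓝 0) := by
  have hlim := (((tendsto_qNumber_Ioo 1).const_mul 2).sub (tendsto_qNumber_Ioo a)).sub
    (tendsto_qNumber_Ioo b) |>.div (tendsto_const_nhds.add
      (tendsto_id.mono_left nhdsWithin_le_nhds)) (by norm_num : (1 : ℝ) + 1 ≠ 0)
  rw [show 2 * 1 - a - b = 0 by linarith, zero_div] at hlim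
  refine hlim.congr' ?_
  -- `q^a + q^b - 2q = (1 - q)(2[1]_q - [a]_q - [b]_q)`
  filter_upwards [self_mem_nhdsWithin] with q hq
  have := sub_pos.2 hq.2
  have : 0 < 1 + q := by linarith [hq.1]
  have : 0 < 1 - q ^ 2 := by nlinarith [hq.1]
  simp only [Pi.div_apply, qNumber, rpow_one, id]
  field_simp
  ring

theorem tendsto_qPochInf_neg_rpow_mul_div {a b : ℝ} (hab : a + b = 2) :
    Tendsto (fun q : ℝ => qPochInf (-q ^ a) (q ^ 2) * qPochInf (-q ^ b) (q ^ 2) /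
      (qPochInf (-q) (q ^ 2) * qPochInf (-q) (q ^ 2))) (𝓝[Ioo 0 1] 1) (𝓝 1) := by
  have hexp := (continuous_exp.tendsto 0).comp (tendsto_rpow_add_rpow_sub_div hab)
  rw [exp_zero] at hexp
  have hbounds : ∀ᶠ q in 𝓝[Ioo 0 1] 1, qPochInf (-q ^ a) (q ^ 2) * qPochInf (-q ^ b) (q ^ 2) /
      (qPochInf (-q) (q ^ 2) * qPochInf (-q) (q ^ 2)) ∈
        Icc 1 (exp ((q ^ a + q ^ b - 2 * q) / (1 - q ^ 2))) := by
    filter_upwards [self_mem_nhdsWithin] with q hq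
    refine qPochInf_neg_mul_div_mem_Icc (sq_nonneg q) (pow_lt_one₀ hq.1.le hq.2 two_ne_zero)
      (rpow_nonneg hq.1.le a) (rpow_nonneg hq.1.le b) hq.1.le ?_
    rw [← rpow_add hq.1, hab, rpow_two]
  exact tendsto_of_tendsto_of_tendsto_of_le_of_le' tendsto_const_nhds hexp
    (hbounds.mono fun _ h => h.1) (hbounds.mono fun _ h => h.2)

theorem tendsto_sq_nhdsWithin_Ioo :
    Tendsto (fun q : ℝ => q ^ 2) (𝓝[Ioo 0 1] 1) (𝓝[Ioo 0 1] 1) := by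
  refine tendsto_nhdsWithin_iff.2 ⟨?_, ?_⟩
  · simpa using ((continuous_pow 2).tendsto (1 : ℝ)).mono_left nhdsWithin_le_nhds
  · filter_upwards [self_mem_nhdsWithin] with q hq
    exact ⟨pow_pos hq.1 2, pow_lt_one₀ hq.1.le hq.2 two_ne_zero⟩

theorem one_sub_sq_rpow_mul_cAlpha {q α : ℝ} (hα : -1 < α) (hq0 : 0 < q) (hq1 : q < 1) :
    (1 - q ^ 2) ^ ((α + 1) / 2) * cAlpha q α =
      sqrt ((1 + q) / 2 * (qPochInf (-q ^ (-(2 * α + 1))) (q ^ 2) *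
        qPochInf (-q ^ (2 * α + 3)) (q ^ 2) / (qPochInf (-q) (q ^ 2) * qPochInf (-q) (q ^ 2))) /
          qGammaF (q ^ 2) (α + 1)) := by
  have hQ0 : 0 < q ^ 2 := by positivity
  have hQ1 : q ^ 2 < 1 := pow_lt_one₀ hq0.le hq1 two_ne_zero
  have ht : 0 < 1 - q ^ 2 := sub_pos.2 hQ1
  have h1q := sub_pos.2 hq1
  have htα := rpow_pos_of_pos ht α
  have hD := qPochInf_pos hQ0.le hQ1 (a := -q) (by linarith)
  have hE := qPochInf_pos hQ0.le hQ1 hQ1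
  have hC := qPochInf_pos hQ0.le hQ1 (rpow_lt_one hq0.le hq1 (by linarith : 0 < 2 * α + 2))
  have hpow : (q ^ 2) ^ (α + 1) = q ^ (2 * α + 2) := by
    rw [← rpow_natCast, ← rpow_mul hq0.le]
    ring_nf
  have hsqrt : (1 - q ^ 2) ^ ((α + 1) / 2) = sqrt ((1 - q ^ 2) ^ (α + 1)) := by
    rw [sqrt_eq_rpow, ← rpow_mul ht.le]
    ring_nf
  rw [cAlpha, hsqrt, ← sqrt_mul (by positivity), qGammaF, hpow, rpow_add_one ht.ne',
    show 1 - (α + 1) = -α by ring, rpow_neg ht.le]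
  congr 1
  field_simp
  ring

/-- limit of the normalization constant `c_α`. -/
theorem stmt_16 (α : ℝ) (hα : -1 < α) :
    Tendsto (fun q : ℝ => (1 - q ^ 2) ^ ((α + 1) / 2) * cAlpha q α)
      (nhdsWithin 1 (Set.Ioo 0 1))
      (nhds (1 / Real.sqrt (Real.Gamma (α + 1)))) := by
  have hα' : 0 < α + 1 := by linarith
  have hΓ := (tendsto_qGammaF hα').comp tendsto_sq_nhdsWithin_Ioo
  have hθ := tendsto_qPochInf_neg_rpow_mul_div (a := -(2 * α + 1)) (b := 2 * α + 3) (by ring)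
  have hhalf : Tendsto (fun q : ℝ => (1 + q) / 2) (𝓝[Ioo 0 1] 1) (𝓝 1) := by
    refine (Continuous.tendsto' (by fun_prop) 1 1 ?_).mono_left nhdsWithin_le_nhds
    norm_num
  have hlim := ((hhalf.mul hθ).div hΓ (Gamma_pos_of_pos hα').ne').sqrt
  rw [one_mul, one_div, sqrt_inv, ← one_div] at hlim
  refine hlim.congr' ?_
  filter_upwards [self_mem_nhdsWithin] with q hq
  exact (one_sub_sq_rpow_mul_cAlpha hα hq.1 hq.2).symm
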